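/- Let X be a real normed space partially ordered by a nontrivial pointed convex cone C, let A ⊆ X, and let x̄ ∈ A. Assume that C is closed, that (C, C_α) has the strict separation property for every 0 < α < 1, and that there exists 0 < δ < 1 such that the section A ∩ (x̄ − C_δ) is weakly compact. If x̄ ∈ Min(A, C), then for every ε > 0 there exists x_ε ∈ GHe(A, C) with ‖x̄ − x_ε‖ < ε. -/
import Mathlib


open Set Metric Pointwise

namespace HenigPaper

variable {X : Type*} [NormedAddCommGroup X] [NormedSpace ℝ X]

/-- `C` is a cone: closed under multiplication by nonnegative scalars. -/
def IsCone (C : Set X) : Prop :=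
  ∀ ⦃l : ℝ⦄, 0 ≤ l → ∀ ⦃x⦄, x ∈ C → l • x ∈ C

/-- `C` is a nontrivial cone: `{0} ⊊ C ⊊ X`. -/
def NontrivialCone (C : Set X) : Prop :=
  IsCone C ∧ ({(0 : X)} : Set X) ⊂ C ∧ C ≠ Set.univ

/-- A cone is pointed if `(-C) ∩ C = {0}`. -/
def PointedCone' (C : Set X) : Prop := (-C) ∩ C = ({(0 : X)} : Set X)

/-- Convexity of a cone in the sense `C + C = C`. -/
def ConeConvex (C : Set X) : Prop := C + C = C

/-- The strict separation property (SSP) for the pair of cones `(C, K)`. -/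
def SSP (C K : Set X) : Prop :=
  (0 : X) ∉ closure (convexHull ℝ (C ∩ sphere (0 : X) 1) -
    convexHull ℝ ((frontier K ∩ sphere (0 : X) 1) ∪ {(0 : X)}))

/-- The Bishop–Phelps cone `C(f, α) = {x : f x ≥ α ‖x‖}`. -/
def BPCone (f : X →L[ℝ] ℝ) (α : ℝ) : Set X := {x : X | α * ‖x‖ ≤ f x}

/-- The sublevel set `S(f, α) = {x : f x + α ‖x‖ ≤ 0}`. -/
def Ssub (f : X →L[ℝ] ℝ) (α : ℝ) : Set X := {x : X | f x + α * ‖x‖ ≤ 0}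

/-- `f ∈ C^#`: strictly positive functionals on `C`. -/
def StrictlyPos (C : Set X) (f : X →L[ℝ] ℝ) : Prop :=
  ∀ x ∈ C, x ≠ 0 → 0 < f x

/-- `(f, α) ∈ C^{a*}`: the augmented dual cone. -/
def MemAugDual (C : Set X) (f : X →L[ℝ] ℝ) (α : ℝ) : Prop :=
  StrictlyPos C f ∧ 0 ≤ α ∧ ∀ x ∈ C, α * ‖x‖ ≤ f x

/-- `(f, α) ∈ C^{a#}_+`. -/
def MemAugDualSharpPlus (C : Set X) (f : X →L[ℝ] ℝ) (α : ℝ) : Prop :=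
  StrictlyPos C f ∧ 0 < α ∧ ∀ x ∈ C, x ≠ 0 → α * ‖x‖ < f x

/-- `B` is a base for the cone `C`. -/
def IsBase (C B : Set X) : Prop :=
  B.Nonempty ∧ Convex ℝ B ∧ B ⊆ C ∧ (0 : X) ∉ closure B ∧
    ∀ x ∈ C, x ≠ (0 : X) → ∃! p : ℝ × X, 0 < p.1 ∧ p.2 ∈ B ∧ x = p.1 • p.2

/-- The cone `C` has a bounded base. -/
def HasBoundedBase (C : Set X) : Prop :=
  ∃ B : Set X, IsBase C B ∧ Bornology.IsBounded B

/-- The cone generated by a set `A`. -/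
def coneGen (A : Set X) : Set X := {y : X | ∃ l : ℝ, 0 ≤ l ∧ ∃ a ∈ A, y = l • a}

/-- The `ε`-conic neighbourhood `C_ε` of a cone `C`. -/
def epsCone (C : Set X) (ε : ℝ) : Set X :=
  coneGen {x : X | infDist x (C ∩ sphere (0 : X) 1) ≤ ε}

/-- `δ_B = inf {‖b‖ : b ∈ B}`. -/
noncomputable def deltaB (B : Set X) : ℝ := sInf ((fun b => ‖b‖) '' B)

/-- The Henig dilating cone `C_{(B,ε)}`. -/
def henigCone (B : Set X) (ε : ℝ) : Set X :=
  coneGen {x : X | infDist x B ≤ ε}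

/-- The set of efficient (Pareto minimal) points of `A` with respect to the cone `C`. -/
def MinSet (A C : Set X) : Set X :=
  {x ∈ A | (A - ({x} : Set X)) ∩ (-C) = ({(0 : X)} : Set X)}

/-- The set of Henig global proper efficient points of `A` with respect to `C`. -/
def GHe (A C : Set X) : Set X :=
  {x : X | ∃ K : Set X, IsCone K ∧ ConeConvex K ∧ C \ {(0 : X)} ⊆ interior K ∧
    x ∈ MinSet A K}

/-- A subset of `X` is weakly compact if it is compact in the weak topology. -/
def WeaklyCompact (A : Set X) : Prop :=
  IsCompact ((toWeakSpace ℝ X) '' A)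

end HenigPaper

namespace Stmt17Aux

open Set Metric Pointwise HenigPaper

variable {X : Type*} [NormedAddCommGroup X] [NormedSpace ℝ X]

lemma smul_mem_coneGen {A : Set X} {l : ℝ} (hl : 0 ≤ l) {a : X} (ha : a ∈ A) :
    l • a ∈ coneGen A := ⟨l, hl, a, ha, rfl⟩

lemma subset_coneGen (A : Set X) : A ⊆ coneGen A :=
  fun a ha => ⟨1, zero_le_one, a, ha, (one_smul ℝ a).symm⟩

lemma zero_mem_coneGen {A : Set X} (h : A.Nonempty) : (0 : X) ∈ coneGen A := by
  obtain ⟨a, ha⟩ := h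
  exact ⟨0, le_refl 0, a, ha, (zero_smul ℝ a).symm⟩

lemma coneGen_mono {A B : Set X} (h : A ⊆ B) : coneGen A ⊆ coneGen B := by
  rintro y ⟨l, hl, a, ha, rfl⟩
  exact ⟨l, hl, a, h ha, rfl⟩

lemma coneGen_smul {A : Set X} {l : ℝ} (hl : 0 ≤ l) {x : X} (hx : x ∈ coneGen A) :
    l • x ∈ coneGen A := by
  obtain ⟨m, hm, a, ha, rfl⟩ := hx
  exact ⟨l * m, mul_nonneg hl hm, a, ha, smul_smul l m a⟩

lemma add_mem_coneGen {A : Set X} (hA : Convex ℝ A) {x y : X}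
    (hx : x ∈ coneGen A) (hy : y ∈ coneGen A) : x + y ∈ coneGen A := by
  obtain ⟨l, hl, a, ha, rfl⟩ := hx
  obtain ⟨m, hm, b, hb, rfl⟩ := hy
  rcases eq_or_lt_of_le (add_nonneg hl hm) with h | h
  · have hl0 : l = 0 := by linarith
    have hm0 : m = 0 := by linarith
    simp only [hl0, hm0, zero_smul, add_zero]
    exact zero_mem_coneGen ⟨a, ha⟩
  · have hsum : 0 < l + m := h
    have hcombo : (l / (l + m)) • a + (m / (l + m)) • b ∈ A :=
      hA ha hb (div_nonneg hl hsum.le) (div_nonneg hm hsum.le) (by field_simp)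
    refine ⟨l + m, hsum.le, _, hcombo, ?_⟩
    rw [smul_add, smul_smul, smul_smul]
    rw [mul_div_cancel₀ _ hsum.ne', mul_div_cancel₀ _ hsum.ne']

lemma convex_coneGen {A : Set X} (hA : Convex ℝ A) : Convex ℝ (coneGen A) := by
  intro x hx y hy a b ha hb _
  exact add_mem_coneGen hA (coneGen_smul ha hx) (coneGen_smul hb hy)

lemma isClosed_coneGen {T : Set X} (hT : IsClosed T) {γ : ℝ} (hγ : γ < 1)
    (hlow : ∀ x ∈ T, 1 - γ ≤ ‖x‖) (hup : ∀ x ∈ T, ‖x‖ ≤ 1 + γ) :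
    IsClosed (coneGen T) := by
  apply IsSeqClosed.isClosed
  intro u y hu huy
  choose l hl a ha hua using hu
  obtain ⟨B, hB⟩ : ∃ B : ℝ, ∀ n, ‖u n‖ ≤ B := by
    obtain ⟨B, hB⟩ := huy.norm.bddAbove_range
    exact ⟨B, fun n => hB ⟨n, rfl⟩⟩
  have hγ0 : (0:ℝ) < 1 - γ := by linarith
  have hlb : ∀ n, l n ≤ B / (1 - γ) := by
    intro n
    have h1 : (1 - γ) * l n ≤ ‖u n‖ := by
      rw [hua n, norm_smul, Real.norm_eq_abs, abs_of_nonneg (hl n)]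
      calc (1 - γ) * l n = l n * (1 - γ) := by ring
      _ ≤ l n * ‖a n‖ := mul_le_mul_of_nonneg_left (hlow _ (ha n)) (hl n)
    rw [le_div_iff₀ hγ0]
    calc l n * (1 - γ) = (1 - γ) * l n := by ring
    _ ≤ ‖u n‖ := h1
    _ ≤ B := hB n
  have hl0 : ∀ n, l n ∈ Set.Icc (0:ℝ) (B / (1 - γ)) := fun n => ⟨hl n, hlb n⟩
  obtain ⟨m, _, φ, hφ, hm⟩ := (isCompact_Icc (a := (0:ℝ)) (b := B / (1-γ))).tendsto_subseq hl0
  have hmnn : (0:ℝ) ≤ m :=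
    le_of_tendsto_of_tendsto' tendsto_const_nhds hm (fun n => hl _)
  rcases eq_or_lt_of_le hmnn with hm0 | hm0
  · have hnorm : Filter.Tendsto (fun n => ‖u (φ n)‖) Filter.atTop (nhds ‖y‖) :=
      (huy.comp hφ.tendsto_atTop).norm
    have hbound : ∀ n, ‖u (φ n)‖ ≤ l (φ n) * (1 + γ) := by
      intro n
      rw [hua _, norm_smul, Real.norm_eq_abs, abs_of_nonneg (hl _)]
      exact mul_le_mul_of_nonneg_left (hup _ (ha _)) (hl _)
    have hlim : Filter.Tendsto (fun n => (l ∘ φ) n * (1 + γ)) Filter.atTop (nhds (m * (1+γ))) :=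
      hm.mul tendsto_const_nhds
    rw [← hm0, zero_mul] at hlim
    have hy0 : ‖y‖ ≤ 0 := le_of_tendsto_of_tendsto' hnorm hlim hbound
    have hyz : y = 0 := by rw [← norm_le_zero_iff]; exact hy0
    rw [hyz]
    exact zero_mem_coneGen ⟨a 0, ha 0⟩
  · have huφ : Filter.Tendsto (fun n => u (φ n)) Filter.atTop (nhds y) :=
      huy.comp hφ.tendsto_atTop
    have hinv : Filter.Tendsto (fun n => (l (φ n))⁻¹) Filter.atTop (nhds m⁻¹) :=
      hm.inv₀ hm0.ne'
    have htend : Filter.Tendsto (fun n => (l (φ n))⁻¹ • u (φ n)) Filter.atTop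
        (nhds (m⁻¹ • y)) := hinv.smul huφ
    have hev : ∀ᶠ n in Filter.atTop, a (φ n) = (l (φ n))⁻¹ • u (φ n) := by
      have hev' : ∀ᶠ n in Filter.atTop, m / 2 < l (φ n) :=
        hm.eventually (eventually_gt_nhds (by linarith))
      filter_upwards [hev'] with n hn
      have hln : l (φ n) ≠ 0 := by
        have h2 : (0:ℝ) < m / 2 := by linarith
        linarith
      rw [hua (φ n), inv_smul_smul₀ hln]
    have haconv : Filter.Tendsto (fun n => a (φ n)) Filter.atTop (nhds (m⁻¹ • y)) :=
      htend.congr' (by filter_upwards [hev] with n hn; exact hn.symm)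
    have hamem : m⁻¹ • y ∈ T := hT.isSeqClosed (fun n => ha (φ n)) haconv
    exact ⟨m, hm0.le, _, hamem, (smul_inv_smul₀ hm0.ne' y).symm⟩

lemma evalCont (f : X →L[ℝ] ℝ) :
    Continuous fun z : WeakSpace ℝ X => f ((toWeakSpace ℝ X).symm z) :=
  WeakBilin.eval_continuous (topDualPairing ℝ X).flip f

lemma weakT2 : T2Space (WeakSpace ℝ X) := by
  constructor
  intro x y hxy
  have hne : (toWeakSpace ℝ X).symm x ≠ (toWeakSpace ℝ X).symm y := by
    intro h; exact hxy ((toWeakSpace ℝ X).symm.injective h)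
  obtain ⟨f, hf⟩ := SeparatingDual.exists_separating_of_ne (R := ℝ) hne
  exact separated_by_continuous (evalCont f) hf

lemma weakClosed_of_convex_closed {s : Set X} (hs : Convex ℝ s) (hc : IsClosed s) :
    IsClosed (toWeakSpace ℝ X '' s) := by
  have h := hs.toWeakSpace_closure ℝ
  rw [hc.closure_eq] at h
  rw [h]
  exact isClosed_closure

lemma mem_singleton_sub {p x : X} {S : Set X} : x ∈ ({p} : Set X) - S ↔ p - x ∈ S := by
  constructor
  · rintro ⟨a, ha, b, hb, rfl⟩
    rw [Set.mem_singleton_iff] at ha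
    subst ha
    simpa using hb
  · intro h
    exact ⟨p, rfl, p - x, h, by module⟩

end Stmt17Aux

open HenigPaper

variable {X : Type*} [NormedAddCommGroup X] [NormedSpace ℝ X]

set_option maxHeartbeats 3200000 in
open Stmt17Aux in
/-- Local approximation of efficient points by Henig global proper efficient
points. -/
theorem stmt17 (C : Set X) (hC : NontrivialCone C) (hpt : PointedCone' C)
    (hconv : ConeConvex C) (hcl : IsClosed C) (A : Set X) (xbar : X) (hxA : xbar ∈ A)
    (hssp : ∀ α : ℝ, 0 < α → α < 1 → SSP C (epsCone C α))
    (δ : ℝ) (h0 : 0 < δ) (h1 : δ < 1)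
    (hcpt : WeaklyCompact (A ∩ (({xbar} : Set X) - epsCone C δ)))
    (hmin : xbar ∈ MinSet A C) :
    ∀ ε : ℝ, 0 < ε → ∃ xe ∈ GHe A C, ‖xbar - xe‖ < ε := by
  intro ε hε
  classical
  obtain ⟨hcone, hzs, -⟩ := hC
  have h0C : (0 : X) ∈ C := hzs.1 rfl
  have hCconv : Convex ℝ C := by
    intro x hx y hy a b ha hb _
    have h1' : a • x ∈ C := hcone ha hx
    have h2' : b • y ∈ C := hcone hb hy
    have h3' : a • x + b • y ∈ C + C := Set.add_mem_add h1' h2'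
    rwa [hconv] at h3'
  -- the "spherical base" of C
  set CS : Set X := C ∩ sphere (0:X) 1 with hCSdef
  have hCSne : CS.Nonempty := by
    obtain ⟨x, hxC, hx0⟩ := Set.exists_of_ssubset hzs
    have hx0' : x ≠ 0 := by simpa using hx0
    have hn : (0:ℝ) < ‖x‖ := norm_pos_iff.2 hx0'
    refine ⟨‖x‖⁻¹ • x, hcone (by positivity) hxC, ?_⟩
    rw [mem_sphere_zero_iff_norm, norm_smul, Real.norm_eq_abs, abs_of_nonneg (by positivity)]
    field_simp
  have hCSsubC : CS ⊆ C := Set.inter_subset_left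
  have hhullC : convexHull ℝ CS ⊆ C := convexHull_min hCSsubC hCconv
  -- the separating functional coming from the SSP hypothesis
  obtain ⟨g, c, hc, hgc⟩ : ∃ g : X →L[ℝ] ℝ, ∃ c : ℝ, 0 < c ∧ ∀ x ∈ CS, c ≤ g x := by
    have hs := hssp δ h0 h1
    rw [SSP] at hs
    have hDconv : Convex ℝ (closure (convexHull ℝ (C ∩ sphere (0:X) 1) -
        convexHull ℝ ((frontier (epsCone C δ) ∩ sphere (0:X) 1) ∪ {(0:X)}))) :=
      ((convex_convexHull ℝ _).sub (convex_convexHull ℝ _)).closure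
    obtain ⟨f, u, hfu, hu0⟩ := geometric_hahn_banach_closed_point hDconv isClosed_closure hs
    have hu : u < 0 := by simpa using hu0
    refine ⟨-f, -u, by linarith, ?_⟩
    intro x hx
    have h0mem : (0:X) ∈ convexHull ℝ ((frontier (epsCone C δ) ∩ sphere (0:X) 1) ∪ {(0:X)}) :=
      subset_convexHull ℝ _ (Or.inr rfl)
    have hmem : x - 0 ∈ convexHull ℝ (C ∩ sphere (0:X) 1) -
        convexHull ℝ ((frontier (epsCone C δ) ∩ sphere (0:X) 1) ∪ {(0:X)}) :=
      Set.sub_mem_sub (subset_convexHull ℝ _ hx) h0mem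
    have hfx := hfu _ (subset_closure hmem)
    rw [sub_zero] at hfx
    simp only [ContinuousLinearMap.neg_apply]
    linarith
  set G := ‖g‖ with hGdef
  have hcG : c ≤ G := by
    obtain ⟨x₀, hx₀⟩ := hCSne
    have hh1 : c ≤ g x₀ := hgc _ hx₀
    have hh2 : g x₀ ≤ ‖g x₀‖ := le_abs_self _
    have hh3 : ‖g x₀‖ ≤ G * ‖x₀‖ := g.le_opNorm x₀
    have hx1 : ‖x₀‖ = 1 := mem_sphere_zero_iff_norm.1 hx₀.2
    rw [hx1, mul_one] at hh3
    linarith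
  have hG : 0 < G := lt_of_lt_of_le hc hcG
  have hghull : ∀ p ∈ convexHull ℝ CS, c ≤ g p := fun p hp =>
    convexHull_min (fun x hx => hgc x hx)
      (convex_halfSpace_ge (IsLinearMap.mk g.map_add g.map_smul) c) hp
  have hnormhull : ∀ p ∈ convexHull ℝ CS, ‖p‖ ≤ 1 := by
    intro p hp
    have hsub : convexHull ℝ CS ⊆ closedBall (0:X) 1 :=
      convexHull_min (fun x hx => by
        rw [mem_closedBall, dist_zero_right, mem_sphere_zero_iff_norm.1 hx.2])
        (convex_closedBall _ _)
    have hmem := hsub hp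
    rwa [mem_closedBall, dist_zero_right] at hmem
  set η : ℝ := c / G with hηdef
  have hηpos : 0 < η := by positivity
  have hηle : η ≤ 1 := by rw [hηdef, div_le_one hG]; exact hcG
  have hGη : G * η = c := by rw [hηdef]; field_simp
  have hlowhull : ∀ p ∈ convexHull ℝ CS, η ≤ ‖p‖ := by
    intro p hp
    have hh1 : c ≤ g p := hghull p hp
    have hh2 : g p ≤ G * ‖p‖ := (le_abs_self _).trans (g.le_opNorm p)
    rw [hηdef, div_le_iff₀ hG]
    nlinarith
  set β₀ : ℝ := min (η * δ / 2) (η / 4) with hβ₀def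
  have hβ₀pos : 0 < β₀ := lt_min (by positivity) (by positivity)
  -- parametrized families of dilating cones
  set Sse : ℝ → Set X := fun β => {x : X | infDist x CS ≤ β} with hSsedef
  set P : ℝ → Set X := fun β => coneGen (convexHull ℝ (Sse β)) with hPdef
  set D : ℝ → Set X := fun β => closure (P β) with hDdef
  set W : Set X := A ∩ (({xbar} : Set X) - epsCone C δ) with hWdef
  set Wb : ℝ → Set X := fun β => W ∩ (({xbar} : Set X) - D β) with hWbdef
  have hSseq : ∀ β : ℝ, Sse β = {x : X | infDist x CS ≤ β} := fun _ => rfl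
  have hPeq : ∀ β : ℝ, P β = coneGen (convexHull ℝ (Sse β)) := fun _ => rfl
  have hDeq : ∀ β : ℝ, D β = closure (P β) := fun _ => rfl
  have hWbeq : ∀ β : ℝ, Wb β = W ∩ (({xbar} : Set X) - D β) := fun _ => rfl
  have hcpt' : IsCompact (toWeakSpace ℝ X '' W) := hcpt
  have hCS_Sse : ∀ β : ℝ, 0 ≤ β → CS ⊆ Sse β := by
    intro β hβ x hx
    show infDist x CS ≤ β
    rw [infDist_zero_of_mem hx]; exact hβ
  have hSse_ne : ∀ β : ℝ, 0 ≤ β → (Sse β).Nonempty :=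
    fun β hβ => hCSne.mono (hCS_Sse β hβ)
  -- the basic decomposition of points of the convex hull of `Sse β`
  have hdecomp : ∀ β : ℝ, 0 < β → ∀ w ∈ convexHull ℝ (Sse β),
      ∃ p ∈ convexHull ℝ CS, ‖w - p‖ ≤ 2*β := by
    intro β hβ
    have hsub : Sse β ⊆ {w : X | ∃ p ∈ convexHull ℝ CS, ‖w - p‖ ≤ 2*β} := by
      intro w hw
      have hlt : infDist w CS < 2*β := lt_of_le_of_lt hw (by linarith)
      obtain ⟨q, hq, hd⟩ := (infDist_lt_iff hCSne).1 hlt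
      exact ⟨q, subset_convexHull ℝ _ hq, by rw [← dist_eq_norm]; exact hd.le⟩
    have hconvT : Convex ℝ {w : X | ∃ p ∈ convexHull ℝ CS, ‖w - p‖ ≤ 2*β} := by
      rintro w₁ ⟨p₁, hp₁, hn₁⟩ w₂ ⟨p₂, hp₂, hn₂⟩ a b ha hb hab
      refine ⟨a • p₁ + b • p₂, (convex_convexHull ℝ _) hp₁ hp₂ ha hb hab, ?_⟩
      have heq : (a•w₁ + b•w₂) - (a•p₁ + b•p₂) = a•(w₁-p₁) + b•(w₂-p₂) := by module
      rw [heq]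
      calc ‖a•(w₁-p₁) + b•(w₂-p₂)‖ ≤ ‖a•(w₁-p₁)‖ + ‖b•(w₂-p₂)‖ := norm_add_le _ _
      _ = a*‖w₁-p₁‖ + b*‖w₂-p₂‖ := by
          rw [norm_smul, norm_smul, Real.norm_eq_abs, Real.norm_eq_abs,
            abs_of_nonneg ha, abs_of_nonneg hb]
      _ ≤ a*(2*β) + b*(2*β) := by
          have hm1 := mul_le_mul_of_nonneg_left hn₁ ha
          have hm2 := mul_le_mul_of_nonneg_left hn₂ hb
          linarith
      _ = 2*β := by rw [← add_mul, hab, one_mul]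
    exact fun w hw => convexHull_min hsub hconvT hw
  -- P β sits inside the conic δ-neighbourhood of C
  have hPeps : ∀ β : ℝ, 0 < β → β ≤ β₀ → P β ⊆ epsCone C δ := by
    intro β hβ hβle z hz
    obtain ⟨m, hm, w, hw, rfl⟩ := hz
    obtain ⟨p, hp, hwp⟩ := hdecomp β hβ w hw
    have hpn : η ≤ ‖p‖ := hlowhull p hp
    have hppos : 0 < ‖p‖ := lt_of_lt_of_le hηpos hpn
    refine ⟨m * ‖p‖, by positivity, ‖p‖⁻¹ • w, ?_, ?_⟩
    · show infDist (‖p‖⁻¹ • w) (C ∩ sphere (0:X) 1) ≤ δ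
      have hq : ‖p‖⁻¹ • p ∈ C ∩ sphere (0:X) 1 := by
        constructor
        · exact hcone (by positivity) (hhullC hp)
        · rw [mem_sphere_zero_iff_norm, norm_smul, Real.norm_eq_abs,
            abs_of_nonneg (by positivity)]
          field_simp
      refine le_trans (infDist_le_dist_of_mem hq) ?_
      rw [dist_eq_norm, ← smul_sub, norm_smul, Real.norm_eq_abs,
        abs_of_nonneg (by positivity)]
      have hinv : ‖p‖⁻¹ ≤ η⁻¹ := by
        apply inv_anti₀ hηpos hpn
      have hb1 : ‖p‖⁻¹ * ‖w - p‖ ≤ η⁻¹ * (2*β) :=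
        mul_le_mul hinv hwp (norm_nonneg _) (by positivity)
      refine le_trans hb1 ?_
      have hβ2 : β ≤ η * δ / 2 := le_trans hβle (min_le_left _ _)
      have h2b : 2*β ≤ η * δ := by linarith
      calc η⁻¹ * (2*β) ≤ η⁻¹ * (η * δ) :=
            mul_le_mul_of_nonneg_left h2b (by positivity)
      _ = δ := by field_simp
    · rw [smul_smul, mul_assoc, mul_inv_cancel₀ hppos.ne', mul_one]
  -- the linear lower bound for g on P β
  have hPnorm : ∀ β : ℝ, 0 < β → β ≤ β₀ → ∀ z ∈ P β, c/4 * ‖z‖ ≤ g z := by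
    intro β hβ hβle z hz
    obtain ⟨m, hm, w, hw, rfl⟩ := hz
    obtain ⟨p, hp, hwp⟩ := hdecomp β hβ w hw
    have hβη : β ≤ η/4 := le_trans hβle (min_le_right _ _)
    have hgwp : |g (w - p)| ≤ G * (2*β) := by
      refine le_trans (g.le_opNorm (w - p)) ?_
      exact mul_le_mul_of_nonneg_left hwp (norm_nonneg g)
    have hgw : c/2 ≤ g w := by
      have h1' : g w = g p + g (w - p) := by rw [map_sub]; ring
      have h4' : G * (2*β) ≤ G * (η/2) := by
        apply mul_le_mul_of_nonneg_left _ hG.le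
        linarith
      have h5' : G * (η/2) = c/2 := by rw [← hGη]; ring
      have habs := abs_le.1 hgwp
      have hgp := hghull p hp
      rw [h1']
      linarith [habs.1]
    have hwn : ‖w‖ ≤ 2 := by
      have hp1 := hnormhull p hp
      have htri : ‖w‖ ≤ ‖p‖ + ‖w - p‖ := by
        calc ‖w‖ = ‖p + (w - p)‖ := by congr 1; abel
        _ ≤ ‖p‖ + ‖w - p‖ := norm_add_le _ _
      have hβ1 : β ≤ 1/4 := by
        have := hηle; linarith
      linarith
    rw [map_smul, smul_eq_mul, norm_smul, Real.norm_eq_abs, abs_of_nonneg hm]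
    have hkey1 : c/4 * ‖w‖ ≤ g w := by nlinarith
    calc c/4 * (m * ‖w‖) = m * (c/4 * ‖w‖) := by ring
    _ ≤ m * g w := mul_le_mul_of_nonneg_left hkey1 hm
  -- distance of P β to C
  have hPdist : ∀ β : ℝ, 0 < β → β ≤ β₀ → ∀ z ∈ P β,
      infDist z C ≤ 4*β/η * ‖z‖ := by
    intro β hβ hβle z hz
    obtain ⟨m, hm, w, hw, rfl⟩ := hz
    obtain ⟨p, hp, hwp⟩ := hdecomp β hβ w hw
    have hβη : β ≤ η/4 := le_trans hβle (min_le_right _ _)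
    have hmp : m • p ∈ C := hcone hm (hhullC hp)
    have hd1 : infDist (m • w) C ≤ m * (2*β) := by
      refine le_trans (infDist_le_dist_of_mem hmp) ?_
      rw [dist_eq_norm, ← smul_sub, norm_smul, Real.norm_eq_abs, abs_of_nonneg hm]
      exact mul_le_mul_of_nonneg_left hwp hm
    have hwlow : η/2 ≤ ‖w‖ := by
      have hpn : η ≤ ‖p‖ := hlowhull p hp
      have htri : ‖p‖ - ‖w - p‖ ≤ ‖w‖ := by
        have h' : ‖p‖ ≤ ‖w‖ + ‖p - w‖ := norm_le_norm_add_norm_sub' p w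
        have h'' : ‖p - w‖ = ‖w - p‖ := norm_sub_rev p w
        linarith
      linarith
    rw [norm_smul, Real.norm_eq_abs, abs_of_nonneg hm]
    refine le_trans hd1 ?_
    have h2 : 4*β/η * (m * ‖w‖) = 4*β*m*‖w‖/η := by ring
    rw [h2, le_div_iff₀ hηpos]
    nlinarith [mul_nonneg (mul_nonneg hm hβ.le) (by linarith : (0:ℝ) ≤ 2*‖w‖ - η)]
  have hPconv : ∀ β : ℝ, Convex ℝ (P β) :=
    fun β => convex_coneGen (convex_convexHull ℝ _)
  -- closedness of epsCone C δ
  have hepsclosed : IsClosed (epsCone C δ) := by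
    show IsClosed (coneGen {x : X | infDist x (C ∩ sphere (0:X) 1) ≤ δ})
    apply isClosed_coneGen (isClosed_le (continuous_infDist_pt _) continuous_const) h1
    · intro x hx
      apply le_of_forall_pos_le_add
      intro ε' hε'
      have hlt : infDist x CS < δ + ε' := lt_of_le_of_lt hx (by linarith)
      obtain ⟨q, hq, hd⟩ := (infDist_lt_iff hCSne).1 hlt
      have hqn : ‖q‖ = 1 := mem_sphere_zero_iff_norm.1 hq.2
      have habs : |‖x‖ - ‖q‖| ≤ ‖x - q‖ := abs_norm_sub_norm_le x q
      rw [dist_eq_norm] at hd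
      have := abs_le.1 habs
      linarith [this.1]
    · intro x hx
      apply le_of_forall_pos_le_add
      intro ε' hε'
      have hlt : infDist x CS < δ + ε' := lt_of_le_of_lt hx (by linarith)
      obtain ⟨q, hq, hd⟩ := (infDist_lt_iff hCSne).1 hlt
      have hqn : ‖q‖ = 1 := mem_sphere_zero_iff_norm.1 hq.2
      have habs : |‖x‖ - ‖q‖| ≤ ‖x - q‖ := abs_norm_sub_norm_le x q
      rw [dist_eq_norm] at hd
      have := abs_le.1 habs
      linarith [this.2]
  -- consequences for D β
  have hDeps : ∀ β : ℝ, 0 < β → β ≤ β₀ → D β ⊆ epsCone C δ := by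
    intro β hβ hβle
    rw [hDeq]
    exact closure_minimal (hPeps β hβ hβle) hepsclosed
  have hDnorm : ∀ β : ℝ, 0 < β → β ≤ β₀ → ∀ z ∈ D β, c/4 * ‖z‖ ≤ g z := by
    intro β hβ hβle z hz
    have hclt : IsClosed {z : X | c/4 * ‖z‖ ≤ g z} :=
      isClosed_le (continuous_const.mul continuous_norm) g.continuous
    exact closure_minimal (fun y hy => hPnorm β hβ hβle y hy) hclt hz
  have hDdist : ∀ β : ℝ, 0 < β → β ≤ β₀ → ∀ z ∈ D β,
      infDist z C ≤ 4*β/η * ‖z‖ := by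
    intro β hβ hβle z hz
    have hclt : IsClosed {z : X | infDist z C ≤ 4*β/η * ‖z‖} :=
      isClosed_le (continuous_infDist_pt _) (continuous_const.mul continuous_norm)
    exact closure_minimal (fun y hy => hPdist β hβ hβle y hy) hclt hz
  have hDadd : ∀ β : ℝ, ∀ u ∈ D β, ∀ v ∈ D β, u + v ∈ D β := by
    intro β u hu v hv
    rw [hDeq] at hu hv ⊢
    obtain ⟨us, hus, hul⟩ := mem_closure_iff_seq_limit.1 hu
    obtain ⟨vs, hvs, hvl⟩ := mem_closure_iff_seq_limit.1 hv
    exact mem_closure_iff_seq_limit.2 ⟨fun n => us n + vs n,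
      fun n => add_mem_coneGen (convex_convexHull ℝ _) (hus n) (hvs n), hul.add hvl⟩
  have h0D : ∀ β : ℝ, 0 ≤ β → (0:X) ∈ D β := fun β hβ =>
    subset_closure (zero_mem_coneGen ((hSse_ne β hβ).mono (subset_convexHull ℝ _)))
  have hxW : xbar ∈ W := by
    refine ⟨hxA, mem_singleton_sub.2 ?_⟩
    rw [sub_self]
    exact zero_mem_coneGen (hSse_ne δ h0.le)
  have hxWb : ∀ β : ℝ, 0 ≤ β → xbar ∈ Wb β := by
    intro β hβ
    refine ⟨hxW, mem_singleton_sub.2 ?_⟩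
    rw [sub_self]
    exact h0D β hβ
  -- weak closedness of the translated dilating cones
  have hWclosed : ∀ β : ℝ, IsClosed (toWeakSpace ℝ X '' (({xbar}:Set X) - D β)) := by
    intro β
    have h1' : ({xbar} : Set X) - D β = closure (({xbar}:Set X) - P β) := by
      rw [hDeq, Set.singleton_sub, Set.singleton_sub]
      show (fun x => xbar - x) '' closure (P β) = closure ((fun x => xbar - x) '' P β)
      exact (Homeomorph.subLeft xbar).image_closure (P β)
    rw [h1', Convex.toWeakSpace_closure ℝ ((convex_singleton xbar).sub (hPconv β))]
    exact isClosed_closure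
  have hWbcpt : ∀ β : ℝ, IsCompact (toWeakSpace ℝ X '' Wb β) := by
    intro β
    rw [hWbeq, Set.image_inter (toWeakSpace ℝ X).injective]
    exact hcpt'.inter_right (hWclosed β)
  have hWbmono : ∀ β β' : ℝ, β ≤ β' → Wb β ⊆ Wb β' := by
    intro β β' hββ'
    apply Set.inter_subset_inter_right
    intro x hx
    rw [mem_singleton_sub] at hx ⊢
    rw [hDeq] at hx ⊢
    exact closure_mono (coneGen_mono (convexHull_mono
      (fun y hy => le_trans hy hββ'))) hx
  -- the sequence of parameters
  set b : ℕ → ℝ := fun n => β₀ / (n+1) with hbdef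
  have hbpos : ∀ n : ℕ, 0 < b n := by
    intro n
    have : (0:ℝ) < (n:ℝ) + 1 := by positivity
    exact div_pos hβ₀pos this
  have hble : ∀ n : ℕ, b n ≤ β₀ := by
    intro n
    apply div_le_self hβ₀pos.le
    have : (0:ℝ) ≤ (n:ℝ) := Nat.cast_nonneg n
    linarith
  have hbmono : ∀ n : ℕ, b (n+1) ≤ b n := by
    intro n
    simp only [hbdef]
    apply div_le_div_of_nonneg_left hβ₀pos.le (by positivity)
    push_cast
    linarith
  set t : ℝ := c * ε / 8 with htdef
  have htpos : 0 < t := by positivity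
  haveI : T2Space (WeakSpace ℝ X) := weakT2
  have hhalfclosed : IsClosed (toWeakSpace ℝ X '' {x : X | g x ≤ g xbar - t}) :=
    weakClosed_of_convex_closed
      (convex_halfSpace_le (IsLinearMap.mk g.map_add g.map_smul) _)
      (isClosed_le g.continuous continuous_const)
  -- the key selection of a good parameter
  have hkey : ∃ n : ℕ, ∀ x ∈ Wb (b n), g xbar - t < g x := by
    by_contra hcon
    push_neg at hcon
    set Kn : ℕ → Set (WeakSpace ℝ X) := fun n =>
      toWeakSpace ℝ X '' (Wb (b n) ∩ {x : X | g x ≤ g xbar - t}) with hKndef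
    have hKcpt : ∀ n, IsCompact (Kn n) := by
      intro n
      have heq : Wb (b n) ∩ {x : X | g x ≤ g xbar - t}
          = W ∩ ((({xbar}:Set X) - D (b n)) ∩ {x : X | g x ≤ g xbar - t}) := by
        rw [hWbeq, Set.inter_assoc]
      show IsCompact (toWeakSpace ℝ X '' (Wb (b n) ∩ {x : X | g x ≤ g xbar - t}))
      have hcl2 : IsClosed (toWeakSpace ℝ X ''
          ((({xbar}:Set X) - D (b n)) ∩ {x : X | g x ≤ g xbar - t})) := by
        rw [Set.image_inter (toWeakSpace ℝ X).injective]
        exact (hWclosed (b n)).inter hhalfclosed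
      rw [heq, Set.image_inter (toWeakSpace ℝ X).injective]
      exact hcpt'.inter_right hcl2
    have hKne : ∀ n, (Kn n).Nonempty := by
      intro n
      obtain ⟨x, hx1, hx2⟩ := hcon n
      exact ⟨toWeakSpace ℝ X x, Set.mem_image_of_mem _ ⟨hx1, hx2⟩⟩
    have hKmono : ∀ n, Kn (n+1) ⊆ Kn n :=
      fun n => Set.image_mono
        (Set.inter_subset_inter_left _ (hWbmono _ _ (hbmono n)))
    have hKcl : ∀ n, IsClosed (Kn n) := fun n => (hKcpt n).isClosed
    obtain ⟨z, hz⟩ := IsCompact.nonempty_iInter_of_sequence_nonempty_isCompact_isClosed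
      Kn hKmono hKne (hKcpt 0) hKcl
    set x' : X := (toWeakSpace ℝ X).symm z with hx'def
    have hx'mem : ∀ n, x' ∈ Wb (b n) ∩ {x : X | g x ≤ g xbar - t} := by
      intro n
      have hzn := Set.mem_iInter.1 hz n
      obtain ⟨w, hw, hwz⟩ := hzn
      have hwx : w = x' := by rw [hx'def, ← hwz, LinearEquiv.symm_apply_apply]
      rwa [hwx] at hw
    have hx'A : x' ∈ A := (hx'mem 0).1.1.1
    have hxd : ∀ n, xbar - x' ∈ D (b n) := fun n =>
      mem_singleton_sub.1 (hx'mem n).1.2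
    have hinf0 : infDist (xbar - x') C = 0 := by
      by_contra hne0
      have hpos : 0 < infDist (xbar - x') C :=
        lt_of_le_of_ne infDist_nonneg (Ne.symm hne0)
      obtain ⟨n, hn⟩ := exists_nat_gt
        ((4*β₀/η) * ‖xbar - x'‖ / infDist (xbar - x') C)
      have hle := hDdist (b n) (hbpos n) (hble n) _ (hxd n)
      have hnp : (0:ℝ) < (n:ℝ) + 1 := by positivity
      have hbn' : b n * ((n:ℝ)+1) = β₀ := by
        show β₀/((n:ℝ)+1) * ((n:ℝ)+1) = β₀
        exact div_mul_cancel₀ β₀ hnp.ne'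
      have h1'' : infDist (xbar - x') C * ((n:ℝ)+1) ≤ (4*β₀/η) * ‖xbar - x'‖ := by
        have hmul := mul_le_mul_of_nonneg_right hle hnp.le
        calc infDist (xbar - x') C * ((n:ℝ)+1)
            ≤ 4*(b n)/η * ‖xbar - x'‖ * ((n:ℝ)+1) := hmul
        _ = 4*(b n * ((n:ℝ)+1))/η * ‖xbar - x'‖ := by ring
        _ = (4*β₀/η) * ‖xbar - x'‖ := by rw [hbn']
      have h2'' : (4*β₀/η) * ‖xbar - x'‖ < (n:ℝ) * infDist (xbar - x') C :=
        (div_lt_iff₀ hpos).1 hn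
      have hexp : infDist (xbar - x') C * ((n:ℝ)+1)
          = (n:ℝ) * infDist (xbar - x') C + infDist (xbar - x') C := by ring
      linarith
    have hxbarC : xbar - x' ∈ C := (hcl.mem_iff_infDist_zero ⟨0, h0C⟩).2 hinf0
    have hmem0 : x' - xbar ∈ (A - ({xbar}:Set X)) ∩ (-C) := by
      constructor
      · exact Set.sub_mem_sub hx'A rfl
      · rw [Set.mem_neg, neg_sub]; exact hxbarC
    rw [hmin.2] at hmem0
    have hx'eq : x' = xbar := by
      have h3'' := Set.mem_singleton_iff.1 hmem0
      have h4'' := sub_eq_zero.1 h3''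
      exact h4''
    have hlast := (hx'mem 0).2
    rw [hx'eq] at hlast
    have hlast' : g xbar ≤ g xbar - t := hlast
    linarith
  obtain ⟨n₀, hn₀⟩ := hkey
  have hβpos : 0 < b n₀ := hbpos n₀
  have hβle : b n₀ ≤ β₀ := hble n₀
  -- minimize g over the weakly compact section
  have hWbne : (toWeakSpace ℝ X '' Wb (b n₀)).Nonempty :=
    ⟨toWeakSpace ℝ X xbar, Set.mem_image_of_mem _ (hxWb (b n₀) hβpos.le)⟩
  obtain ⟨z, hzmem, hzmin⟩ :=
    (hWbcpt (b n₀)).exists_isMinOn hWbne (evalCont g).continuousOn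
  set xe : X := (toWeakSpace ℝ X).symm z with hxedef
  have hxeWb : xe ∈ Wb (b n₀) := by
    obtain ⟨w, hw, hwz⟩ := hzmem
    have hwx : w = xe := by rw [hxedef, ← hwz, LinearEquiv.symm_apply_apply]
    rwa [hwx] at hw
  have hminxe : ∀ y ∈ Wb (b n₀), g xe ≤ g y := by
    intro y hy
    have h' := hzmin (Set.mem_image_of_mem (toWeakSpace ℝ X) hy)
    have h'' : g ((toWeakSpace ℝ X).symm z)
        ≤ g ((toWeakSpace ℝ X).symm (toWeakSpace ℝ X y)) := h'
    rwa [LinearEquiv.symm_apply_apply] at h''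
  have hxeA : xe ∈ A := hxeWb.1.1
  have hxeD : xbar - xe ∈ D (b n₀) := mem_singleton_sub.1 hxeWb.2
  -- the dilating Henig cone
  set Kc : Set X := coneGen (convexHull ℝ CS + closedBall (0:X) (b n₀)) with hKcdef
  have hKgenconv : Convex ℝ (convexHull ℝ CS + closedBall (0:X) (b n₀)) :=
    (convex_convexHull ℝ _).add (convex_closedBall _ _)
  have hgen_ne : (convexHull ℝ CS + closedBall (0:X) (b n₀)).Nonempty := by
    obtain ⟨q, hq⟩ := hCSne
    exact ⟨q + 0, Set.add_mem_add (subset_convexHull ℝ _ hq)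
      (mem_closedBall_self hβpos.le)⟩
  have h0K : (0:X) ∈ Kc := zero_mem_coneGen hgen_ne
  have hKcone : IsCone Kc := fun l hl x hx => coneGen_smul hl hx
  have hKCC : ConeConvex Kc := by
    apply Set.Subset.antisymm
    · intro x hx
      rw [Set.mem_add] at hx
      obtain ⟨u', hu', v', hv', huv⟩ := hx
      rw [← huv]
      exact add_mem_coneGen hKgenconv hu' hv'
    · intro x hx
      rw [Set.mem_add]
      exact ⟨x, hx, 0, h0K, add_zero x⟩
  have hKsubP : Kc ⊆ P (b n₀) := by
    rw [hPeq]
    apply coneGen_mono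
    have hTsub : convexHull ℝ CS ⊆
        {p : X | ∀ e : X, ‖e‖ ≤ b n₀ → p + e ∈ convexHull ℝ (Sse (b n₀))} := by
      apply convexHull_min
      · intro q hq e he
        apply subset_convexHull
        show infDist (q + e) CS ≤ b n₀
        refine le_trans (infDist_le_dist_of_mem hq) ?_
        rw [dist_eq_norm]
        simpa using he
      · rintro p₁ hp₁ p₂ hp₂ a b' ha hb' hab
        intro e he
        have he' : a • e + b' • e = e := by rw [← add_smul, hab, one_smul]
        have heq : (a • p₁ + b' • p₂) + e = a • (p₁ + e) + b' • (p₂ + e) := by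
          have hexp : a • (p₁ + e) + b' • (p₂ + e)
              = (a • p₁ + b' • p₂) + (a • e + b' • e) := by
            rw [smul_add, smul_add]; abel
          rw [hexp, he']
        rw [heq]
        exact (convex_convexHull ℝ _) (hp₁ e he) (hp₂ e he) ha hb' hab
    intro x hx
    rw [Set.mem_add] at hx
    obtain ⟨p, hp, e, he, hpe⟩ := hx
    have he' : ‖e‖ ≤ b n₀ := by rwa [mem_closedBall, dist_zero_right] at he
    rw [← hpe]
    exact hTsub hp e he'
  have hKint : C \ {(0:X)} ⊆ interior Kc := by
    rintro x ⟨hxC, hx0⟩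
    have hx0' : x ≠ 0 := by simpa using hx0
    have hnx : 0 < ‖x‖ := norm_pos_iff.2 hx0'
    rw [mem_interior]
    refine ⟨ball x (‖x‖ * b n₀), ?_, isOpen_ball, mem_ball_self (by positivity)⟩
    intro y hy
    have h1' : ‖x‖⁻¹ • x ∈ CS := by
      constructor
      · exact hcone (by positivity) hxC
      · rw [mem_sphere_zero_iff_norm, norm_smul, Real.norm_eq_abs,
          abs_of_nonneg (by positivity)]
        field_simp
    have h2' : ‖x‖⁻¹ • (y - x) ∈ closedBall (0:X) (b n₀) := by
      rw [mem_closedBall, dist_zero_right, norm_smul, Real.norm_eq_abs,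
        abs_of_nonneg (by positivity)]
      rw [mem_ball, dist_eq_norm] at hy
      have h3' : ‖x‖⁻¹ * ‖y - x‖ ≤ ‖x‖⁻¹ * (‖x‖ * b n₀) :=
        mul_le_mul_of_nonneg_left hy.le (by positivity)
      rwa [← mul_assoc, inv_mul_cancel₀ hnx.ne', one_mul] at h3'
    have h3' : ‖x‖⁻¹ • y ∈ convexHull ℝ CS + closedBall (0:X) (b n₀) := by
      rw [Set.mem_add]
      refine ⟨‖x‖⁻¹ • x, subset_convexHull ℝ _ h1', ‖x‖⁻¹ • (y - x), h2', ?_⟩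
      rw [← smul_add]
      congr 1
      abel
    have h4' := smul_mem_coneGen (norm_nonneg x) h3'
    rwa [smul_inv_smul₀ hnx.ne'] at h4'
  have hβη4 : b n₀ ≤ η / 4 := le_trans hβle (min_le_right _ _)
  have hgK : ∀ k ∈ Kc, k ≠ 0 → 0 < g k := by
    intro k hk hk0
    obtain ⟨m, hm, w, hw, rfl⟩ := hk
    have hm0 : m ≠ 0 := by
      rintro rfl
      simp at hk0
    have hmpos : 0 < m := lt_of_le_of_ne hm (Ne.symm hm0)
    rw [Set.mem_add] at hw
    obtain ⟨p, hp, e, he, hpe⟩ := hw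
    have hen : ‖e‖ ≤ b n₀ := by rwa [mem_closedBall, dist_zero_right] at he
    have hge : |g e| ≤ G * b n₀ :=
      le_trans (g.le_opNorm e) (mul_le_mul_of_nonneg_left hen (norm_nonneg g))
    have hgp : c ≤ g p := hghull p hp
    have hgw : 0 < g w := by
      rw [← hpe, map_add]
      have hβc : G * b n₀ ≤ c/4 := by
        have h5' : G * (η/4) = c/4 := by rw [← hGη]; ring
        calc G * b n₀ ≤ G * (η/4) := mul_le_mul_of_nonneg_left hβη4 hG.le
        _ = c/4 := h5'
      have h6' := (abs_le.1 hge).1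
      linarith
    rw [map_smul, smul_eq_mul]
    exact mul_pos hmpos hgw
  have hPsubD : P (b n₀) ⊆ D (b n₀) := subset_closure
  have hMinSet : xe ∈ MinSet A Kc := by
    refine ⟨hxeA, ?_⟩
    apply Set.Subset.antisymm
    · rintro v ⟨hv1, hv2⟩
      rw [Set.mem_sub] at hv1
      obtain ⟨a, ha, u', hu', hau⟩ := hv1
      rw [Set.mem_singleton_iff] at hu'
      subst hu'
      rw [Set.mem_neg] at hv2
      rw [Set.mem_singleton_iff]
      by_contra hv0
      have hxea : xe - a ∈ Kc := by
        rw [← hau, neg_sub] at hv2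
        exact hv2
      have hne' : xe - a ≠ 0 := by
        intro hz'
        apply hv0
        have h9 : a - xe = 0 := by
          have h10 : -(xe - a) = a - xe := neg_sub xe a
          rw [← h10, hz', neg_zero]
        rw [← hau]
        exact h9
      have hgpos := hgK _ hxea hne'
      have haWb : a ∈ Wb (b n₀) := by
        have hD' : xbar - a ∈ D (b n₀) := by
          have heq2 : xbar - a = (xbar - xe) + (xe - a) := by abel
          rw [heq2]
          exact hDadd _ _ hxeD _ (hPsubD (hKsubP hxea))
        exact ⟨⟨ha, mem_singleton_sub.2 (hDeps _ hβpos hβle hD')⟩,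
          mem_singleton_sub.2 hD'⟩
      have hle' := hminxe a haWb
      have hsub' : g (xe - a) = g xe - g a := map_sub g xe a
      linarith
    · intro v hv
      rw [Set.mem_singleton_iff] at hv
      subst hv
      refine ⟨?_, ?_⟩
      · rw [Set.mem_sub]
        exact ⟨xe, hxeA, xe, rfl, sub_self xe⟩
      · rw [Set.mem_neg, neg_zero]
        exact h0K
  -- conclusion
  have hgap := hn₀ xe hxeWb
  have hnb := hDnorm _ hβpos hβle _ hxeD
  have hgd : g (xbar - xe) = g xbar - g xe := map_sub g xbar xe
  have hfinal : ‖xbar - xe‖ < ε := by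
    have h1'' : c/4 * ‖xbar - xe‖ < t := by
      rw [hgd] at hnb
      linarith
    rw [htdef] at h1''
    nlinarith [norm_nonneg (xbar - xe)]
  exact ⟨xe, ⟨Kc, hKcone, hKCC, hKint, hMinSet⟩, hfinal⟩
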